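/- arXiv:1703.06075 — 2 statements merged into one kernel-verified Lean document; each statement's English description precedes it below -/
import Mathlib

section
/- Let m, n, q be positive integers. Then the series Σ_{k=1}^{∞} (−1)^{nk−1} · ( Π_{j=1}^{m−1} L_{nk+jnq} ) / ( Π_{j=0}^{m} F_{nk+jnq} ) converges, and its sum equals q·√(5^m) / (2 F_{mnq}) − (1 / (2 F_{mnq})) · Σ_{k=1}^{q} Π_{j=0}^{m−1} ( L_{nk+jnq} / F_{nk+jnq} ). -/
/-!
Write `r t = L t / F t` and `G k = ∏_{j<m} r (nk + jnq)`. The identity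
`L (y + d) F y - F (y + d) L y = 2 (-1)^(y+1) F d` shows that the `k`-th term of the series is
`(G (k + q) - G k) / (2 F (mnq))`, so the partial sums telescope with step `q` to
`(∑_{k=1}^q G (N + k) - ∑_{k=1}^q G k) / (2 F (mnq))`. By Binet's formulas `r t → √5`, hence
`G N → √5 ^ m`.
-/

open Filter Topology

/-- The Lucas numbers: `L 0 = 2`, `L 1 = 1`, `L (n+2) = L (n+1) + L n`. -/
def lucas : ℕ → ℕ
  | 0 => 2
  | 1 => 1
  | n + 2 => lucas (n + 1) + lucas n

open Finset Real
open scoped goldenRatio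

theorem sum_Icc_one_eq_sum_range {M : Type*} [AddCommMonoid M] (f : ℕ → M) (N : ℕ) :
    ∑ k ∈ Icc 1 N, f k = ∑ k ∈ range N, f (k + 1) := by
  rw [range_eq_Ico, sum_Ico_add', ← Ico_add_one_right_eq_Icc, zero_add]

theorem prod_Icc_one_eq_prod_range {M : Type*} [CommMonoid M] (f : ℕ → M) (N : ℕ) :
    ∏ k ∈ Icc 1 N, f k = ∏ k ∈ range N, f (k + 1) := by
  rw [range_eq_Ico, prod_Ico_add', ← Ico_add_one_right_eq_Icc, zero_add]

theorem sum_range_sub_shift {M : Type*} [AddCommGroup M] (f : ℕ → M) (N q : ℕ) :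
    ∑ k ∈ range N, (f (k + q) - f k) = ∑ k ∈ range q, f (N + k) - ∑ k ∈ range q, f k := by
  have h₁ := sum_range_add f N q
  have h₂ := sum_range_add f q N
  rw [add_comm q N, h₁] at h₂
  simp only [sum_sub_distrib, add_comm _ q]
  rw [sub_eq_sub_iff_add_eq_add, add_comm, ← h₂, add_comm]

theorem sum_Icc_sub_shift {M : Type*} [AddCommGroup M] (f : ℕ → M) (N q : ℕ) :
    ∑ k ∈ Icc 1 N, (f (k + q) - f k) = ∑ k ∈ Icc 1 q, f (N + k) - ∑ k ∈ Icc 1 q, f k := by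
  simp only [sum_Icc_one_eq_sum_range, ← add_assoc, add_right_comm _ 1 q]
  exact sum_range_sub_shift (fun k ↦ f (k + 1)) N q

theorem prod_range_div_succ_sub_prod_range_div {K : Type*} [Field K] (u v : ℕ → K) {m : ℕ}
    (hm : 0 < m) (hv : ∀ j ≤ m, v j ≠ 0) :
    ∏ j ∈ range m, u (j + 1) / v (j + 1) - ∏ j ∈ range m, u j / v j =
      (∏ j ∈ Icc 1 (m - 1), u j) * (u m * v 0 - v m * u 0) / ∏ j ∈ range (m + 1), v j := by
  obtain ⟨p, rfl⟩ := Nat.exists_eq_add_one_of_ne_zero hm.ne'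
  have hv' : ∏ j ∈ range p, v (j + 1) ≠ 0 :=
    prod_ne_zero_iff.2 fun j hj ↦ hv _ (by simp at hj; omega)
  rw [Nat.add_sub_cancel, prod_Icc_one_eq_prod_range, prod_range_succ, prod_range_succ',
    prod_range_succ, prod_range_succ', prod_div_distrib]
  have := hv 0 (by omega)
  have := hv (p + 1) le_rfl
  field_simp

theorem neg_one_pow_sub_one {R : Type*} [Monoid R] [HasDistribNeg R] {a : ℕ} (ha : 0 < a) :
    (-1 : R) ^ (a - 1) = (-1) ^ (a + 1) := by
  obtain ⟨b, rfl⟩ := Nat.exists_eq_add_one_of_ne_zero ha.ne'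
  simp [pow_succ]

theorem coe_lucas_eq (t : ℕ) : (lucas t : ℝ) = φ ^ t + ψ ^ t := by
  induction t using Nat.twoStepInduction with
  | zero => norm_num [lucas]
  | one => simp [lucas, goldenRatio_add_goldenConj]
  | more t ih₁ ih₂ =>
    rw [lucas, Nat.cast_add, ih₁, ih₂]
    linear_combination φ ^ t * goldenRatio_sq + ψ ^ t * goldenConj_sq
      - (φ ^ t + ψ ^ t) / 2 * sq_sqrt (by norm_num : (0 : ℝ) ≤ 5)

theorem lucas_add_mul_fib_sub_fib_add_mul_lucas (y d : ℕ) :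
    (lucas (y + d) * Nat.fib y - Nat.fib (y + d) * lucas y : ℝ) =
      2 * (-1) ^ (y + 1) * Nat.fib d := by
  have h : (φ * ψ) ^ y = (-1) ^ y := by rw [goldenRatio_mul_goldenConj]
  have hsub : φ - ψ = √5 := goldenRatio_sub_goldenConj
  have hne : φ - ψ ≠ 0 := by rw [hsub]; positivity
  simp only [coe_lucas_eq, coe_fib_eq, ← hsub]
  -- with `φ`, `ψ` opaque, `ring` cannot unfold them and can use `h`
  generalize φ = a, ψ = b at *
  field_simp
  linear_combination 2 * (b ^ d - a ^ d) * h

theorem tendsto_lucas_div_fib_atTop :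
    Tendsto (fun t ↦ (lucas t / Nat.fib t : ℝ)) atTop (𝓝 √5) := by
  have h₁ t : (lucas t / Nat.fib t : ℝ) = √5 * (1 + (ψ / φ) ^ t) / (1 - (ψ / φ) ^ t) := by
    simp only [coe_lucas_eq, coe_fib_eq, div_pow]
    field
  have h₂ := tendsto_pow_atTop_nhds_zero_of_abs_lt_one (r := ψ / φ) <| by
    rw [abs_div, div_lt_one <| by positivity, abs_of_pos goldenRatio_pos, abs_lt]
    ring_nf
    bound
  rw [show √5 = √5 * (1 + 0) / (1 - 0) by ring, funext h₁]
  exact ((h₂.const_add 1).const_mul _).div (h₂.const_sub 1) (by simp)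

noncomputable def lucasDivFibProd (m n q k : ℕ) : ℝ :=
  ∏ j ∈ range m, (lucas (n * k + j * n * q) : ℝ) / Nat.fib (n * k + j * n * q)

theorem summand_eq_lucasDivFibProd_add_sub {m n q k : ℕ} (hm : 0 < m) (hn : 0 < n) (hq : 0 < q)
    (hk : 0 < k) :
    (-1 : ℝ) ^ (n * k - 1) * (∏ j ∈ Icc 1 (m - 1), (lucas (n * k + j * n * q) : ℝ)) /
        ∏ j ∈ range (m + 1), (Nat.fib (n * k + j * n * q) : ℝ) =
      (lucasDivFibProd m n q (k + q) - lucasDivFibProd m n q k) / (2 * Nat.fib (m * n * q)) := by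
  have hfib (j : ℕ) : (Nat.fib (n * k + j * n * q) : ℝ) ≠ 0 := by
    have : 0 < n * k := Nat.mul_pos hn hk
    exact_mod_cast (Nat.fib_pos.2 (by omega)).ne'
  have hshift : lucasDivFibProd m n q (k + q) = ∏ j ∈ range m,
      (lucas (n * k + (j + 1) * n * q) : ℝ) / Nat.fib (n * k + (j + 1) * n * q) := by
    unfold lucasDivFibProd
    refine prod_congr rfl fun j _ ↦ ?_
    rw [show n * (k + q) + j * n * q = n * k + (j + 1) * n * q by ring]
  have hFmnq : (Nat.fib (m * n * q) : ℝ) ≠ 0 := by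
    exact_mod_cast (Nat.fib_pos.2 (by positivity)).ne'
  have htel := prod_range_div_succ_sub_prod_range_div (fun j ↦ (lucas (n * k + j * n * q) : ℝ))
    (fun j ↦ (Nat.fib (n * k + j * n * q) : ℝ)) hm fun j _ ↦ hfib j
  simp only [zero_mul, add_zero] at htel
  rw [hshift, lucasDivFibProd, htel, lucas_add_mul_fib_sub_fib_add_mul_lucas,
    neg_one_pow_sub_one (Nat.mul_pos hn hk)]
  field_simp

theorem tendsto_lucasDivFibProd (m q : ℕ) {n : ℕ} (hn : 0 < n) :
    Tendsto (lucasDivFibProd m n q) atTop (𝓝 (√5 ^ m)) := by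
  rw [show √5 ^ m = ∏ _j ∈ range m, √5 by simp]
  refine tendsto_finsetProd _ fun j _ ↦ tendsto_lucas_div_fib_atTop.comp ?_
  exact tendsto_atTop_mono (fun k ↦ le_add_right (Nat.le_mul_of_pos_left k hn)) tendsto_id

/-- Theorem (Fibonacci denominators, general alternating sum):
`Σ_{k=1}^{∞} (−1)^{nk−1} (Π_{j=1}^{m−1} L_{nk+jnq}) / (Π_{j=0}^{m} F_{nk+jnq})
  = q√(5^m)/(2 F_{mnq}) − (1/(2F_{mnq})) Σ_{k=1}^{q} Π_{j=0}^{m−1} L_{nk+jnq}/F_{nk+jnq}`. -/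
theorem stmt_3 (m n q : ℕ) (hm : 0 < m) (hn : 0 < n) (hq : 0 < q) :
    Tendsto (fun N => ∑ k ∈ Finset.Icc 1 N,
        (-1 : ℝ) ^ (n * k - 1) *
          (∏ j ∈ Finset.Icc 1 (m - 1), (lucas (n * k + j * n * q) : ℝ)) /
          ∏ j ∈ Finset.range (m + 1), (Nat.fib (n * k + j * n * q) : ℝ))
      atTop
      (𝓝 ((q : ℝ) * Real.sqrt (5 ^ m) / (2 * (Nat.fib (m * n * q) : ℝ))
        - (1 / (2 * (Nat.fib (m * n * q) : ℝ))) *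
          ∑ k ∈ Finset.Icc 1 q, ∏ j ∈ Finset.range m,
            (lucas (n * k + j * n * q) : ℝ) / (Nat.fib (n * k + j * n * q) : ℝ))) := by
  have hpartial (N : ℕ) : ∑ k ∈ Icc 1 N, (-1 : ℝ) ^ (n * k - 1) *
      (∏ j ∈ Icc 1 (m - 1), (lucas (n * k + j * n * q) : ℝ)) /
        ∏ j ∈ range (m + 1), (Nat.fib (n * k + j * n * q) : ℝ) =
      (∑ k ∈ Icc 1 q, lucasDivFibProd m n q (N + k) - ∑ k ∈ Icc 1 q, lucasDivFibProd m n q k) /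
        (2 * Nat.fib (m * n * q)) := by
    rw [← sum_Icc_sub_shift, sum_div]
    exact sum_congr rfl fun k hk ↦ summand_eq_lucasDivFibProd_add_sub hm hn hq (mem_Icc.1 hk).1
  have hlim : Tendsto (fun N ↦ ∑ k ∈ Icc 1 q, lucasDivFibProd m n q (N + k)) atTop
      (𝓝 (q * √5 ^ m)) := by
    have := tendsto_finsetSum (Icc 1 q) fun k _ ↦
      (tendsto_lucasDivFibProd m q hn).comp (tendsto_add_atTop_nat k)
    simpa [sum_const, nsmul_eq_mul] using this
  have hsqrt : √((5 : ℝ) ^ m) = √5 ^ m := by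
    rw [sqrt_eq_iff_eq_sq (by positivity) (by positivity), ← pow_mul, mul_comm, pow_mul,
      sq_sqrt (by norm_num)]
  rw [funext hpartial]
  convert (hlim.sub_const _).div_const _ using 2
  simp only [hsqrt, lucasDivFibProd]
  ring
end

section
/- Let m, n, q be positive integers such that q is even or mnq is odd. Then the series Σ_{k=1}^{∞} (−1)^{k−1} · F_{2nk+mnq} / ( Π_{j=0}^{m} F_{nk+jnq}^2 ) converges, and its sum equals (1 / F_{mnq}) · Σ_{k=1}^{q} (−1)^{k−1} / ( Π_{j=0}^{m−1} F_{nk+jnq}^2 ). -/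
/-!
Binet's formula gives `F_{x+y}² = F_y F_{2x+y} + (-1)^y F_x²`. With `x = nk`, `y = mnq` and
`(-1)^{mnq} = (-1)^q` (this is where `q` even or `mnq` odd enters), it shows that the `k`-th
summand equals `c_k - c_{k+q}` for `c_k = (-1)^{k-1} / (F_{mnq} ∏_{j<m} F_{nk+jnq}²)`.
The series therefore telescopes with period `q`, and its sum is `c_1 + ⋯ + c_q` since `c_k → 0`.
-/

open Filter Topology Finset

theorem fib_add_sq (x y : ℕ) :
    (Nat.fib (x + y) : ℝ) ^ 2 = Nat.fib y * Nat.fib (2 * x + y) + (-1) ^ y * Nat.fib x ^ 2 := by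
  have hsign : (-1 : ℝ) ^ y = Real.goldenRatio ^ y * Real.goldenConj ^ y := by
    rw [← mul_pow, Real.goldenRatio_mul_goldenConj]
  simp only [Real.coe_fib_eq, hsign, pow_add, pow_mul']
  generalize Real.goldenRatio ^ x = a, Real.goldenConj ^ x = b, Real.goldenRatio ^ y = c,
    Real.goldenConj ^ y = d
  ring

theorem neg_one_pow_mul_eq_neg_one_pow {R : Type*} [Monoid R] [HasDistribNeg R] {a q : ℕ}
    (h : Even q ∨ Odd (a * q)) : (-1 : R) ^ (a * q) = (-1) ^ q := by
  rcases h with hq | haq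
  · rw [hq.neg_one_pow, (hq.mul_left a).neg_one_pow]
  · rw [haq.neg_one_pow, (Nat.odd_mul.1 haq).2.neg_one_pow]

theorem tendsto_fib_atTop : Tendsto Nat.fib atTop atTop :=
  tendsto_atTop_mono' _ (eventually_ge_atTop 5 |>.mono fun _ ↦ Nat.le_fib_self) tendsto_id

section Telescoping

variable {M : Type*} [AddCommGroup M]

theorem sum_range_sub_add_shift (c : ℕ → M) (q N : ℕ) :
    ∑ k ∈ range N, (c k - c (k + q)) = ∑ k ∈ range q, c k - ∑ k ∈ range q, c (N + k) := by
  induction N with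
  | zero => simp
  | succ N ih =>
    have hshift : ∑ k ∈ range q, c (N + 1 + k) = ∑ k ∈ range q, c (N + k) + c (N + q) - c N := by
      rw [eq_sub_iff_add_eq, ← sum_range_succ (fun k ↦ c (N + k)), sum_range_succ']
      simp only [add_zero, add_right_comm N 1, ← add_assoc]
    rw [sum_range_succ, ih, hshift]
    abel

theorem tendsto_sum_Icc_sub_add_shift [TopologicalSpace M] [IsTopologicalAddGroup M]
    {c : ℕ → M} (hc : Tendsto c atTop (𝓝 0)) (q : ℕ) :
    Tendsto (fun N ↦ ∑ k ∈ Icc 1 N, (c k - c (k + q))) atTop (𝓝 (∑ k ∈ Icc 1 q, c k)) := by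
  have hIcc (f : ℕ → M) (N : ℕ) : ∑ k ∈ Icc 1 N, f k = ∑ k ∈ range N, f (k + 1) := by
    rw [← Ico_add_one_right_eq_Icc, sum_Ico_eq_sum_range, Nat.add_sub_cancel]
    simp only [add_comm 1]
  have htail : Tendsto (fun N ↦ ∑ k ∈ range q, c (N + k + 1)) atTop (𝓝 0) := by
    have := tendsto_finsetSum (range q) fun k _ ↦ hc.comp (tendsto_add_atTop_nat (k + 1))
    rwa [sum_const_zero] at this
  rw [← sub_zero (∑ k ∈ Icc 1 q, c k)]
  refine (tendsto_const_nhds.sub htail).congr fun N ↦ ?_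
  rw [hIcc, hIcc]
  simp only [add_right_comm _ 1 q]
  exact (sum_range_sub_add_shift (fun k ↦ c (k + 1)) q N).symm

end Telescoping

section FibSqProd

variable {m n q k : ℕ}

def fibSqProd (m n q k : ℕ) : ℝ := ∏ j ∈ range m, (Nat.fib (n * k + j * n * q) : ℝ) ^ 2

noncomputable def fibTerm (m n q k : ℕ) : ℝ :=
  (-1) ^ (k - 1) / (Nat.fib (m * n * q) * fibSqProd m n q k)

theorem fibSqProd_succ :
    fibSqProd (m + 1) n q k = fibSqProd m n q k * Nat.fib (n * k + m * n * q) ^ 2 :=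
  prod_range_succ _ _

theorem fibSqProd_succ' :
    fibSqProd (m + 1) n q k = fibSqProd m n q (k + q) * Nat.fib (n * k) ^ 2 := by
  rw [fibSqProd, prod_range_succ']
  congr 1
  · exact prod_congr rfl fun j _ ↦ by ring_nf
  · simp

theorem one_le_fibSqProd (hn : 0 < n) (hk : 0 < k) : 1 ≤ fibSqProd m n q k :=
  one_le_prod fun j _ ↦ one_le_pow₀ (Nat.one_le_cast.2 (Nat.fib_pos.2 (by positivity)))

theorem tendsto_fibSqProd_atTop (hm : 0 < m) (hn : 0 < n) :
    Tendsto (fibSqProd m n q) atTop atTop := by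
  obtain ⟨m, rfl⟩ := Nat.exists_eq_add_of_lt hm
  have hfib : Tendsto (fun k ↦ (Nat.fib (n * k) : ℝ) ^ 2) atTop atTop :=
    (tendsto_pow_atTop two_ne_zero).comp <| tendsto_natCast_atTop_atTop.comp <|
      tendsto_fib_atTop.comp (tendsto_id.const_mul_atTop' hn)
  refine tendsto_atTop_mono' _ ((eventually_gt_atTop 0).mono fun k hk ↦ ?_) hfib
  rw [zero_add, fibSqProd_succ']
  exact le_mul_of_one_le_left (sq_nonneg _) (one_le_fibSqProd hn (by omega))

theorem tendsto_fibTerm_zero (hm : 0 < m) (hn : 0 < n) (hq : 0 < q) :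
    Tendsto (fibTerm m n q) atTop (𝓝 0) := by
  have hg : (0 : ℝ) < Nat.fib (m * n * q) := Nat.cast_pos.2 (Nat.fib_pos.2 (by positivity))
  have hden := (tendsto_fibSqProd_atTop (q := q) hm hn).const_mul_atTop hg
  refine squeeze_zero_norm (fun k ↦ ?_) (tendsto_norm_atTop_atTop.comp hden).inv_tendsto_atTop
  simp [fibTerm]

theorem fibTerm_sub_fibTerm_add (hm : 0 < m) (hn : 0 < n) (hq : 0 < q) (hk : 0 < k)
    (h : Even q ∨ Odd (m * n * q)) :
    fibTerm m n q k - fibTerm m n q (k + q) =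
      (-1) ^ (k - 1) * Nat.fib (2 * n * k + m * n * q) / fibSqProd (m + 1) n q k := by
  have hkey := fib_add_sq (n * k) (m * n * q)
  rw [neg_one_pow_mul_eq_neg_one_pow h, ← mul_assoc] at hkey
  have hprod : fibSqProd m n q k * Nat.fib (n * k + m * n * q) ^ 2 =
      fibSqProd m n q (k + q) * Nat.fib (n * k) ^ 2 :=
    fibSqProd_succ.symm.trans fibSqProd_succ'
  have hg : (Nat.fib (m * n * q) : ℝ) ≠ 0 :=
    Nat.cast_ne_zero.2 (Nat.fib_pos.2 (by positivity)).ne'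
  have hP := zero_lt_one.trans_le (one_le_fibSqProd (m := m) (q := q) hn hk)
  have hP' := zero_lt_one.trans_le (one_le_fibSqProd (m := m) (q := q) hn (k := k + q) (by omega))
  rw [fibTerm, fibTerm, show k + q - 1 = k - 1 + q by omega, pow_add, fibSqProd_succ]
  field_simp
  linear_combination fibSqProd m n q (k + q) * hkey - (-1 : ℝ) ^ q * hprod

end FibSqProd

/-- Theorem (`q` even or `mnq` odd):
`Σ_{k=1}^{∞} (−1)^{k−1} F_{2nk+mnq} / (Π_{j=0}^{m} F_{nk+jnq}^2)
  = (1/F_{mnq}) Σ_{k=1}^{q} (−1)^{k−1}/(Π_{j=0}^{m−1} F_{nk+jnq}^2)`. -/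
theorem stmt_18 (m n q : ℕ) (hm : 0 < m) (hn : 0 < n) (hq : 0 < q)
    (h : Even q ∨ Odd (m * n * q)) :
    Tendsto (fun N => ∑ k ∈ Finset.Icc 1 N,
        (-1 : ℝ) ^ (k - 1) * (Nat.fib (2 * n * k + m * n * q) : ℝ) /
          ∏ j ∈ Finset.range (m + 1), (Nat.fib (n * k + j * n * q) : ℝ) ^ 2)
      atTop
      (𝓝 ((1 / (Nat.fib (m * n * q) : ℝ)) *
        ∑ k ∈ Finset.Icc 1 q,
          (-1 : ℝ) ^ (k - 1) / ∏ j ∈ Finset.range m, (Nat.fib (n * k + j * n * q) : ℝ) ^ 2)) := by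
  have hlimit : (1 / (Nat.fib (m * n * q) : ℝ)) * ∑ k ∈ Icc 1 q,
      (-1 : ℝ) ^ (k - 1) / ∏ j ∈ range m, (Nat.fib (n * k + j * n * q) : ℝ) ^ 2 =
        ∑ k ∈ Icc 1 q, fibTerm m n q k := by
    rw [mul_sum]
    exact sum_congr rfl fun k _ ↦ by simp only [fibTerm, fibSqProd]; ring
  rw [hlimit]
  refine (tendsto_sum_Icc_sub_add_shift (tendsto_fibTerm_zero hm hn hq) q).congr fun N ↦ ?_
  exact sum_congr rfl fun k hk ↦ fibTerm_sub_fibTerm_add hm hn hq (mem_Icc.1 hk).1 h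
end
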